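/- arXiv:2109.02981 — 2 statements merged into one kernel-verified Lean document; each statement's English description precedes it below -/
import Mathlib

section
/- For 0 < α < 1, the matrix power map F_α(S) = S^α (defined via spectral decomposition) is (α, m^{(1-α)/2})-Hölder continuous on the cone of m×m real symmetric positive semi-definite matrices: ‖S₁^α - S₂^α‖_F ≤ m^{(1-α)/2} ‖S₁ - S₂‖_F^α. -/
open Matrix

/-- The Frobenius norm of a real matrix. -/
noncomputable def frobNorm {m : ℕ} (A : Matrix (Fin m) (Fin m) ℝ) : ℝ :=
  Real.sqrt (∑ i, ∑ j, (A i j) ^ 2)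

/-- The matrix power map S ↦ S^α defined via the spectral decomposition. -/
noncomputable def matPow {m : ℕ} {S : Matrix (Fin m) (Fin m) ℝ}
    (hS : S.IsHermitian) (α : ℝ) : Matrix (Fin m) (Fin m) ℝ :=
  (hS.eigenvectorUnitary : Matrix (Fin m) (Fin m) ℝ) *
    Matrix.diagonal (fun i => hS.eigenvalues i ^ α) *
    star (hS.eigenvectorUnitary : Matrix (Fin m) (Fin m) ℝ)

/-!
Write `Sₖ = Uₖ Dₖ Uₖᵀ` with `D₁ = diag d`, `D₂ = diag e`, and put `W = U₁ᵀ U₂`. Conjugating by the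
orthogonal matrices `U₁ᵀ, U₂` preserves the Frobenius norm and turns `S₁^α - S₂^α` into the matrix
with entries `(dᵢ^α - eⱼ^α) Wᵢⱼ`, and `S₁ - S₂` into `(dᵢ - eⱼ) Wᵢⱼ`. Subadditivity of `t ↦ t^α`
gives `|dᵢ^α - eⱼ^α| ≤ |dᵢ - eⱼ|^α`, and Hölder's inequality with the weights `Wᵢⱼ²`, whose total
is `‖W‖_F² = m`, gives `∑ Wᵢⱼ² |dᵢ - eⱼ|^{2α} ≤ m^{1-α} (∑ Wᵢⱼ² |dᵢ - eⱼ|²)^α`.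
-/

open Finset

namespace Real

lemma abs_rpow_sub_rpow_le {x y p : ℝ} (hx : 0 ≤ x) (hy : 0 ≤ y) (hp0 : 0 ≤ p) (hp1 : p ≤ 1) :
    |x ^ p - y ^ p| ≤ |x - y| ^ p := by
  wlog hyx : y ≤ x generalizing x y
  · rw [abs_sub_comm, abs_sub_comm x]
    exact this hy hx (le_of_not_ge hyx)
  have hsub : x ^ p ≤ (x - y) ^ p + y ^ p := by
    simpa using rpow_add_le_add_rpow (sub_nonneg.2 hyx) hy hp0 hp1
  rw [abs_of_nonneg (sub_nonneg.2 (rpow_le_rpow hy hyx hp0)), abs_of_nonneg (sub_nonneg.2 hyx)]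
  linarith

lemma sq_rpow_sub_rpow_le {x y p : ℝ} (hx : 0 ≤ x) (hy : 0 ≤ y) (hp0 : 0 ≤ p) (hp1 : p ≤ 1) :
    (x ^ p - y ^ p) ^ 2 ≤ ((x - y) ^ 2) ^ p := by
  rw [← sq_abs, ← sq_abs (x - y), ← rpow_pow_comm (abs_nonneg _)]
  exact pow_le_pow_left₀ (abs_nonneg _) (abs_rpow_sub_rpow_le hx hy hp0 hp1) 2

lemma sum_mul_rpow_le_weight_mul_sum_mul {ι : Type*} (s : Finset ι) {p : ℝ} (hp0 : 0 < p)
    (hp1 : p ≤ 1) (w f : ι → ℝ) (hw : ∀ i, 0 ≤ w i) (hf : ∀ i, 0 ≤ f i) :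
    ∑ i ∈ s, w i * f i ^ p ≤ (∑ i ∈ s, w i) ^ (1 - p) * (∑ i ∈ s, w i * f i) ^ p := by
  have h := inner_le_weight_mul_Lp_of_nonneg s ((one_le_inv₀ hp0).2 hp1) w (fun i => f i ^ p) hw
    (fun i => rpow_nonneg (hf i) p)
  simpa only [inv_inv, ← rpow_mul (hf _), mul_inv_cancel₀ hp0.ne', rpow_one] using h

end Real

namespace Matrix

variable {n : Type*} [Fintype n]

lemma sum_sq_eq_trace_star_mul (A : Matrix n n ℝ) :
    ∑ i, ∑ j, A i j ^ 2 = trace (star A * A) := by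
  simp only [trace, diag, mul_apply, star_apply, star_trivial, sq]
  exact Finset.sum_comm

variable [DecidableEq n]

lemma sum_sq_star_mul_mul {U V : Matrix n n ℝ} (hU : U ∈ unitaryGroup n ℝ)
    (hV : V ∈ unitaryGroup n ℝ) (X : Matrix n n ℝ) :
    ∑ i, ∑ j, (star U * X * V) i j ^ 2 = ∑ i, ∑ j, X i j ^ 2 := by
  have hUU : U * star U = 1 := mem_unitaryGroup_iff.mp hU
  have hVV : V * star V = 1 := mem_unitaryGroup_iff.mp hV
  have h : star (star U * X * V) * (star U * X * V) = star V * (star X * X * V) := by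
    simp only [star_mul, star_star, Matrix.mul_assoc]
    rw [← Matrix.mul_assoc U, hUU, Matrix.one_mul]
  rw [sum_sq_eq_trace_star_mul, sum_sq_eq_trace_star_mul, h, trace_mul_comm, Matrix.mul_assoc,
    hVV, Matrix.mul_one]

lemma sum_sq_of_mem_unitaryGroup {W : Matrix n n ℝ} (hW : W ∈ unitaryGroup n ℝ) :
    ∑ i, ∑ j, W i j ^ 2 = Fintype.card n := by
  rw [sum_sq_eq_trace_star_mul, mem_unitaryGroup_iff'.mp hW, trace_one]

lemma star_mul_conj_diagonal_sub_mul_apply {U V : Matrix n n ℝ}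
    (hU : U ∈ unitaryGroup n ℝ) (hV : V ∈ unitaryGroup n ℝ) (f g : n → ℝ) (i j : n) :
    (star U * (U * diagonal f * star U - V * diagonal g * star V) * V) i j =
      (f i - g j) * (star U * V) i j := by
  have hU' : star U * U = 1 := mem_unitaryGroup_iff'.mp hU
  have hV' : star V * V = 1 := mem_unitaryGroup_iff'.mp hV
  have h : star U * (U * diagonal f * star U - V * diagonal g * star V) * V =
      diagonal f * (star U * V) - (star U * V) * diagonal g := by
    simp only [Matrix.mul_sub, Matrix.sub_mul, Matrix.mul_assoc, hV', Matrix.mul_one]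
    rw [← Matrix.mul_assoc (star U) U, hU', Matrix.one_mul]
  rw [h, sub_apply, diagonal_mul, mul_diagonal]
  ring

lemma sum_sq_rpow_sub_mul_le {p : ℝ} (hp0 : 0 < p) (hp1 : p ≤ 1) {d e : n → ℝ}
    (hd : ∀ i, 0 ≤ d i) (he : ∀ j, 0 ≤ e j) {W : Matrix n n ℝ} (hW : W ∈ unitaryGroup n ℝ) :
    ∑ i, ∑ j, ((d i ^ p - e j ^ p) * W i j) ^ 2 ≤
      (Fintype.card n : ℝ) ^ (1 - p) * (∑ i, ∑ j, ((d i - e j) * W i j) ^ 2) ^ p := by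
  have hpt (i j : n) :
      ((d i ^ p - e j ^ p) * W i j) ^ 2 ≤ W i j ^ 2 * ((d i - e j) ^ 2) ^ p := by
    rw [mul_pow, mul_comm]
    exact mul_le_mul_of_nonneg_left (Real.sq_rpow_sub_rpow_le (hd i) (he j) hp0.le hp1)
      (sq_nonneg _)
  calc ∑ i, ∑ j, ((d i ^ p - e j ^ p) * W i j) ^ 2
      ≤ ∑ q : n × n, W q.1 q.2 ^ 2 * ((d q.1 - e q.2) ^ 2) ^ p := by
        rw [Fintype.sum_prod_type]
        exact sum_le_sum fun i _ => sum_le_sum fun j _ => hpt i j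
    _ ≤ (∑ q : n × n, W q.1 q.2 ^ 2) ^ (1 - p) *
          (∑ q : n × n, W q.1 q.2 ^ 2 * (d q.1 - e q.2) ^ 2) ^ p :=
        Real.sum_mul_rpow_le_weight_mul_sum_mul _ hp0 hp1 _ _ (fun _ => sq_nonneg _)
          (fun _ => sq_nonneg _)
    _ = (Fintype.card n : ℝ) ^ (1 - p) * (∑ i, ∑ j, ((d i - e j) * W i j) ^ 2) ^ p := by
        simp only [Fintype.sum_prod_type, sum_sq_of_mem_unitaryGroup hW, mul_pow, mul_comm]

end Matrix

open Matrix

lemma matPow_one {m : ℕ} {S : Matrix (Fin m) (Fin m) ℝ} (hS : S.IsHermitian) :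
    matPow hS 1 = S := by
  conv_rhs => rw [hS.spectral_theorem]
  simp [matPow, Unitary.conjStarAlgAut_apply]

lemma sum_sq_matPow_sub {m : ℕ} {S₁ S₂ : Matrix (Fin m) (Fin m) ℝ} (h₁ : S₁.IsHermitian)
    (h₂ : S₂.IsHermitian) (p : ℝ) :
    ∑ i, ∑ j, (matPow h₁ p - matPow h₂ p) i j ^ 2 =
      ∑ i, ∑ j, ((h₁.eigenvalues i ^ p - h₂.eigenvalues j ^ p) *
        (star (h₁.eigenvectorUnitary : Matrix (Fin m) (Fin m) ℝ) *
          h₂.eigenvectorUnitary) i j) ^ 2 := by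
  rw [← sum_sq_star_mul_mul h₁.eigenvectorUnitary.2 h₂.eigenvectorUnitary.2]
  simp only [matPow, star_mul_conj_diagonal_sub_mul_apply h₁.eigenvectorUnitary.2
    h₂.eigenvectorUnitary.2]

/-- For 0 < α < 1, the matrix power map is (α, m^{(1-α)/2})-Hölder continuous on the
cone of positive semi-definite matrices. -/
theorem matPow_holder (m : ℕ) (α : ℝ) (hα0 : 0 < α) (hα1 : α < 1)
    (S₁ S₂ : Matrix (Fin m) (Fin m) ℝ)
    (h₁ : S₁.PosSemidef) (h₂ : S₂.PosSemidef) :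
    frobNorm (matPow h₁.isHermitian α - matPow h₂.isHermitian α) ≤
      (m : ℝ) ^ ((1 - α) / 2) * frobNorm (S₁ - S₂) ^ α := by
  have hW : star (h₁.isHermitian.eigenvectorUnitary : Matrix (Fin m) (Fin m) ℝ) *
      h₂.isHermitian.eigenvectorUnitary ∈ unitaryGroup (Fin m) ℝ :=
    mul_mem (Unitary.star_mem h₁.isHermitian.eigenvectorUnitary.2)
      h₂.isHermitian.eigenvectorUnitary.2
  have key := sum_sq_rpow_sub_mul_le hα0 hα1.le h₁.eigenvalues_nonneg h₂.eigenvalues_nonneg hW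
  have hdiff := sum_sq_matPow_sub h₁.isHermitian h₂.isHermitian 1
  simp only [matPow_one, Real.rpow_one] at hdiff
  rw [← hdiff, ← sum_sq_matPow_sub, Fintype.card_fin] at key
  have hb : 0 ≤ ∑ i, ∑ j, (S₁ - S₂) i j ^ 2 := by positivity
  calc frobNorm (matPow h₁.isHermitian α - matPow h₂.isHermitian α)
      ≤ Real.sqrt ((m : ℝ) ^ (1 - α) * (∑ i, ∑ j, (S₁ - S₂) i j ^ 2) ^ α) :=
        Real.sqrt_le_sqrt key
    _ = (m : ℝ) ^ ((1 - α) / 2) * frobNorm (S₁ - S₂) ^ α := by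
        rw [frobNorm, Real.sqrt_mul (by positivity), Real.sqrt_eq_rpow, Real.sqrt_eq_rpow,
          Real.sqrt_eq_rpow, ← Real.rpow_mul (Nat.cast_nonneg m), ← Real.rpow_mul hb,
          ← Real.rpow_mul hb]
        ring_nf
end

section
/- For α ≥ 1 and C ≥ 0, the matrix power map F_α(S) = S^α is Lipschitz with constant αC^{α-1} on the set E_m = {S symmetric positive semi-definite m×m : λ₁(S) ≤ C}: ‖S₁^α - S₂^α‖_F ≤ αC^{α-1}‖S₁ - S₂‖_F for S₁, S₂ ∈ E_m. -/
open Matrix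

lemma sum_sq_eq_trace {m : ℕ} (A : Matrix (Fin m) (Fin m) ℝ) :
    ∑ i, ∑ j, (A i j)^2 = trace (star A * A) := by
  simp only [trace, Matrix.mul_apply, Matrix.star_apply, star_trivial, diag, sq]
  rw [Finset.sum_comm]

lemma frob_conj {m : ℕ} {U V : Matrix (Fin m) (Fin m) ℝ}
    (hU : U ∈ Matrix.unitaryGroup (Fin m) ℝ) (hV : V ∈ Matrix.unitaryGroup (Fin m) ℝ)
    (X : Matrix (Fin m) (Fin m) ℝ) :
    frobNorm (star U * X * V) = frobNorm X := by
  have hU' : U * star U = 1 := (Matrix.mem_unitaryGroup_iff).mp hU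
  have hV' : V * star V = 1 := (Matrix.mem_unitaryGroup_iff).mp hV
  unfold frobNorm
  rw [sum_sq_eq_trace, sum_sq_eq_trace]
  congr 1
  have : star (star U * X * V) * (star U * X * V)
      = star V * (star X * (U * star U) * X) * V := by
    simp only [StarMul.star_mul, star_star]
    noncomm_ring
  rw [this, hU', mul_one, Matrix.trace_mul_comm, ← mul_assoc, hV', one_mul]

lemma scalar_lip {α C : ℝ} (hα : 1 ≤ α) {x y : ℝ}
    (hx : x ∈ Set.Icc (0:ℝ) C) (hy : y ∈ Set.Icc (0:ℝ) C) :
    |x ^ α - y ^ α| ≤ α * C ^ (α - 1) * |x - y| := by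
  have key := (convex_Icc (0:ℝ) C).norm_image_sub_le_of_norm_hasDerivWithin_le
    (f := fun t => t ^ α) (f' := fun t => α * t ^ (α - 1))
    (fun t ht => (Real.hasDerivAt_rpow_const (Or.inr hα)).hasDerivWithinAt)
    (fun t ht => by
      rw [Real.norm_eq_abs, abs_of_nonneg (mul_nonneg (by linarith) (Real.rpow_nonneg ht.1 _))]
      exact mul_le_mul_of_nonneg_left
        (Real.rpow_le_rpow ht.1 ht.2 (by linarith)) (by linarith))
    hy hx
  simpa [Real.norm_eq_abs] using key

/-- For α ≥ 1, the matrix power map is αC^{α-1}-Lipschitz on positive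
semi-definite matrices whose eigenvalues are bounded by C. -/
theorem matPow_lipschitz (m : ℕ) (α : ℝ) (hα : 1 ≤ α) (C : ℝ) (hC : 0 ≤ C)
    (S₁ S₂ : Matrix (Fin m) (Fin m) ℝ)
    (h₁ : S₁.PosSemidef) (h₂ : S₂.PosSemidef)
    (hev₁ : ∀ i, h₁.isHermitian.eigenvalues i ≤ C)
    (hev₂ : ∀ i, h₂.isHermitian.eigenvalues i ≤ C) :
    frobNorm (matPow h₁.isHermitian α - matPow h₂.isHermitian α) ≤
      α * C ^ (α - 1) * frobNorm (S₁ - S₂) := by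
  set U : Matrix (Fin m) (Fin m) ℝ := (h₁.isHermitian.eigenvectorUnitary : Matrix (Fin m) (Fin m) ℝ) with hUdef
  set V : Matrix (Fin m) (Fin m) ℝ := (h₂.isHermitian.eigenvectorUnitary : Matrix (Fin m) (Fin m) ℝ) with hVdef
  have hU : U ∈ Matrix.unitaryGroup (Fin m) ℝ := (h₁.isHermitian.eigenvectorUnitary).2
  have hV : V ∈ Matrix.unitaryGroup (Fin m) ℝ := (h₂.isHermitian.eigenvectorUnitary).2
  have hUs : star U * U = 1 := (Matrix.mem_unitaryGroup_iff').mp hU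
  have hVs : star V * V = 1 := (Matrix.mem_unitaryGroup_iff').mp hV
  set d := h₁.isHermitian.eigenvalues
  set e := h₂.isHermitian.eigenvalues
  set W := star U * V with hW
  have hL0 : 0 ≤ α * C ^ (α - 1) := mul_nonneg (by linarith) (Real.rpow_nonneg hC _)
  have hdmem : ∀ i, d i ∈ Set.Icc (0:ℝ) C := fun i => ⟨h₁.eigenvalues_nonneg i, hev₁ i⟩
  have hemem : ∀ j, e j ∈ Set.Icc (0:ℝ) C := fun j => ⟨h₂.eigenvalues_nonneg j, hev₂ j⟩
  -- conjugated differences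
  have key : ∀ (f : Fin m → ℝ) (g : Fin m → ℝ),
      star U * (U * diagonal f * star U - V * diagonal g * star V) * V
        = diagonal f * W - W * diagonal g := by
    intro f g
    have h1 : star U * (U * diagonal f * star U) * V = diagonal f * W := by
      rw [hW]; simp only [← mul_assoc]; rw [hUs, one_mul]
    have h2 : star U * (V * diagonal g * star V) * V = W * diagonal g := by
      rw [hW]; simp only [← mul_assoc]; rw [mul_assoc, hVs, mul_one]
    rw [Matrix.mul_sub, Matrix.sub_mul, h1, h2]
  have hS1 : S₁ = U * diagonal d * star U := by
    have := h₁.isHermitian.spectral_theorem; simpa using this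
  have hS2 : S₂ = V * diagonal e * star V := by
    have := h₂.isHermitian.spectral_theorem; simpa using this
  have conjPow : star U * (matPow h₁.isHermitian α - matPow h₂.isHermitian α) * V
      = diagonal (fun i => d i ^ α) * W - W * diagonal (fun j => e j ^ α) := by
    rw [matPow, matPow]; exact key _ _
  have conjDiff : star U * (S₁ - S₂) * V
      = diagonal d * W - W * diagonal e := by
    conv_lhs => rw [hS1, hS2]
    exact key _ _
  rw [← frob_conj hU hV (matPow h₁.isHermitian α - matPow h₂.isHermitian α),
    ← frob_conj hU hV (S₁ - S₂), conjPow, conjDiff]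
  -- entrywise bound
  unfold frobNorm
  rw [show (α * C ^ (α - 1)) * Real.sqrt (∑ i, ∑ j, ((diagonal d * W - W * diagonal e) i j)^2)
      = Real.sqrt ((α * C ^ (α - 1))^2 * ∑ i, ∑ j, ((diagonal d * W - W * diagonal e) i j)^2) by
    rw [Real.sqrt_mul (sq_nonneg _), Real.sqrt_sq hL0]]
  apply Real.sqrt_le_sqrt
  rw [Finset.mul_sum]
  apply Finset.sum_le_sum
  intro i _
  rw [Finset.mul_sum]
  apply Finset.sum_le_sum
  intro j _
  have hentry1 : (diagonal (fun i => d i ^ α) * W - W * diagonal (fun j => e j ^ α)) i j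
      = (d i ^ α - e j ^ α) * W i j := by
    simp [Matrix.sub_apply, Matrix.diagonal_mul, Matrix.mul_diagonal, sub_mul, mul_comm]
  have hentry2 : (diagonal d * W - W * diagonal e) i j = (d i - e j) * W i j := by
    simp [Matrix.sub_apply, Matrix.diagonal_mul, Matrix.mul_diagonal, sub_mul, mul_comm]
  rw [hentry1, hentry2]
  have h := scalar_lip hα (hdmem i) (hemem j)
  have hb : (d i ^ α - e j ^ α)^2 ≤ (α * C ^ (α - 1))^2 * (d i - e j)^2 := by
    calc (d i ^ α - e j ^ α)^2 = |d i ^ α - e j ^ α|^2 := (sq_abs _).symm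
      _ ≤ ((α * C ^ (α - 1)) * |d i - e j|)^2 := by
          apply pow_le_pow_left₀ (abs_nonneg _) h
      _ = (α * C ^ (α - 1))^2 * (d i - e j)^2 := by rw [mul_pow, sq_abs]
  calc ((d i ^ α - e j ^ α) * W i j)^2
      = (d i ^ α - e j ^ α)^2 * (W i j)^2 := mul_pow _ _ _
    _ ≤ (α * C ^ (α - 1))^2 * (d i - e j)^2 * (W i j)^2 :=
        mul_le_mul_of_nonneg_right hb (sq_nonneg _)
    _ = (α * C ^ (α - 1))^2 * ((d i - e j) * W i j)^2 := by ring
end
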